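/- arXiv:2106.08742 — 8 statements merged into one kernel-verified Lean document; each statement's English description precedes it below -/
import Mathlib

section
/- A class of groups 𝔎 is uniformly amenable if and only if it satisfies a uniform isoperimetric inequality. -/
open Pointwise

attribute [local instance] Classical.propDecidable

/-- A class (family) of groups is *uniformly amenable* if there is a function
`m : ℝ_{>0} × ℕ → ℕ` such that for every `ε > 0`, every group `G` in the class and every
finite subset `S ⊆ G` there is a nonempty finite Følner set `F` with `|F| ≤ m(ε,|S|)` and
`|S·F| ≤ (1+ε)|F|`. -/
def UniformlyAmenableFamily {ι : Type*} (G : ι → Type*) [∀ i, Group (G i)] : Prop :=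
  ∃ m : ℝ → ℕ → ℕ, ∀ ε : ℝ, 0 < ε → ∀ i : ι, ∀ S : Finset (G i),
    ∃ F : Finset (G i), F.Nonempty ∧ F.card ≤ m ε S.card ∧
      ((S * F).card : ℝ) ≤ (1 + ε) * F.card

/-- A class of groups satisfies a *uniform isoperimetric inequality* if there is
`m̃ : ℝ_{>0} × ℕ → ℕ` such that for all `ε > 0`, every group `G` in the class and every finite
symmetric subset `S ⊆ G` there is a nonempty finite `E ⊆ G` with `|E| ≤ m̃(ε,|S|)` and
`|∂_S E| / |E| ≤ ε`, where `∂_S E = SE \ E`. -/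
def UniformIsoperimetricFamily {ι : Type*} (G : ι → Type*) [∀ i, Group (G i)] : Prop :=
  ∃ m : ℝ → ℕ → ℕ, ∀ ε : ℝ, 0 < ε → ∀ i : ι, ∀ S : Finset (G i), S = S⁻¹ →
    ∃ E : Finset (G i), E.Nonempty ∧ E.card ≤ m ε S.card ∧
      (((S * E) \ E).card : ℝ) / E.card ≤ ε

/-- A class of groups is uniformly amenable if and only if it satisfies a uniform
isoperimetric inequality. -/
theorem uniformlyAmenable_iff_uniformIsoperimetric {ι : Type*} (G : ι → Type*)
    [∀ i, Group (G i)] :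
    UniformlyAmenableFamily G ↔ UniformIsoperimetricFamily G := by
  constructor
  · rintro ⟨m, hm⟩
    refine ⟨fun ε n => (Finset.range (n + 2)).sup (m ε), fun ε hε i S _ => ?_⟩
    obtain ⟨F, hFne, hFcard, hF⟩ := hm ε hε i (S ∪ {1})
    have hFpos : (0 : ℝ) < F.card := by exact_mod_cast hFne.card_pos
    have h1 : (1 : G i) ∈ S ∪ {1} := Finset.mem_union_right _ (Finset.mem_singleton_self 1)
    have hsub : F ⊆ (S ∪ {1}) * F := fun x hx => by
      simpa using Finset.mul_mem_mul h1 hx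
    refine ⟨F, hFne, ?_, ?_⟩
    · refine hFcard.trans (Finset.le_sup (Finset.mem_range.mpr ?_))
      have := Finset.card_union_le S ({1} : Finset (G i))
      simp only [Finset.card_singleton] at this
      omega
    · rw [div_le_iff₀ hFpos]
      have hsd : (S * F) \ F ⊆ ((S ∪ {1}) * F) \ F :=
        Finset.sdiff_subset_sdiff (Finset.mul_subset_mul_right Finset.subset_union_left)
          le_rfl
      have hcard : ((((S ∪ {1}) * F) \ F).card : ℝ) = ((S ∪ {1}) * F).card - F.card := by
        rw [Finset.card_sdiff_of_subset hsub, Nat.cast_sub (Finset.card_le_card hsub)]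
      calc (((S * F) \ F).card : ℝ) ≤ ((((S ∪ {1}) * F) \ F).card : ℝ) := by
              exact_mod_cast Finset.card_le_card hsd
        _ = ((S ∪ {1}) * F).card - F.card := hcard
        _ ≤ (1 + ε) * F.card - F.card := by linarith
        _ = ε * F.card := by ring
  · rintro ⟨m, hm⟩
    refine ⟨fun ε n => (Finset.range (2 * n + 2)).sup (m ε), fun ε hε i S => ?_⟩
    set T : Finset (G i) := (S ∪ S⁻¹) ∪ {1} with hT
    have hTsymm : T = T⁻¹ := by
      ext x
      simp only [hT, Finset.mem_inv', Finset.mem_union, Finset.mem_singleton,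
        inv_eq_one, inv_inv]
      tauto
    obtain ⟨E, hEne, hEcard, hE⟩ := hm ε hε i T hTsymm
    have hEpos : (0 : ℝ) < E.card := by exact_mod_cast hEne.card_pos
    have h1 : (1 : G i) ∈ T := Finset.mem_union_right _ (Finset.mem_singleton_self 1)
    have hsub : E ⊆ T * E := fun x hx => by
      simpa using Finset.mul_mem_mul h1 hx
    refine ⟨E, hEne, ?_, ?_⟩
    · refine hEcard.trans (Finset.le_sup (Finset.mem_range.mpr ?_))
      have h2 := Finset.card_union_le (S ∪ S⁻¹) ({1} : Finset (G i))
      have h3 := Finset.card_union_le S S⁻¹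
      have hTc : T.card = (S ∪ S⁻¹ ∪ {1}).card := by rw [hT]
      simp only [Finset.card_singleton, Finset.card_inv] at h2 h3
      omega
    · have hbd : (((T * E) \ E).card : ℝ) ≤ ε * E.card := by
        rw [div_le_iff₀ hEpos] at hE
        exact hE
      have hTE : ((T * E).card : ℝ) ≤ (1 + ε) * E.card := by
        have : T * E ⊆ E ∪ ((T * E) \ E) := by
          intro x hx
          by_cases hxE : x ∈ E
          · exact Finset.mem_union_left _ hxE
          · exact Finset.mem_union_right _ (Finset.mem_sdiff.mpr ⟨hx, hxE⟩)
        have h4 : ((T * E).card : ℝ) ≤ E.card + ((T * E) \ E).card := by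
          have := (Finset.card_le_card this).trans (Finset.card_union_le _ _)
          exact_mod_cast this
        linarith
      have hS : S * E ⊆ T * E :=
        Finset.mul_subset_mul_right (Finset.subset_union_left.trans Finset.subset_union_left)
      calc ((S * E).card : ℝ) ≤ ((T * E).card : ℝ) := by
            exact_mod_cast Finset.card_le_card hS
        _ ≤ (1 + ε) * E.card := hTE
end

section
/- If a class of groups satisfies the uniform Reiter condition, then it satisfies a uniform isoperimetric inequality: for every ε' > 0, every group G in the class, and every finite symmetric subset S ⊆ G, there is a finite subset E ⊆ G of size at most r(ε'/|S|, |S|) with |∂_S E| ≤ ε'|E|. -/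
open Pointwise

attribute [local instance] Classical.propDecidable

/-!
Layer-cake argument. For `μ ≥ 0` finitely supported and `t > 0`, let `E_t = {x | t ≤ μ x}`.
Integrating over `t > 0`, `∫ |E_t| dt = ∑ μ = 1`, while
`∫ #{x ∈ E_t | g x ∉ E_t} dt ≤ ‖λ*_g μ - μ‖₁ < ε'/|S|`. Summing over `g ∈ S`,
the integrand `∑_g #{x ∈ E_t | g x ∉ E_t}` has integral `< ε' ∫ |E_t| dt`, so at some `t` it is
`< ε' |E_t|`; it also bounds `|S E_t \ E_t|`, and `E_t ⊆ supp μ` has the required size.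
-/

open Finset MeasureTheory

noncomputable def layer (a : ℝ) : ℝ → ℝ := (Set.Ioc 0 a).indicator 1

lemma layer_of_pos {a t : ℝ} (ht : 0 < t) : layer a t = if t ≤ a then 1 else 0 := by
  simp [layer, Set.indicator_apply, ht]

lemma layer_of_nonpos (a : ℝ) {t : ℝ} (ht : t ≤ 0) : layer a t = 0 :=
  Set.indicator_of_notMem (fun h => (h.1.trans_le ht).false) _

lemma integrable_layer (a : ℝ) : Integrable (layer a) :=
  (integrable_indicator_iff measurableSet_Ioc).2 (integrableOn_const measure_Ioc_lt_top.ne)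

lemma integral_layer {a : ℝ} (ha : 0 ≤ a) : ∫ t, layer a t = a := by
  rw [layer, integral_indicator_one measurableSet_Ioc, Real.volume_real_Ioc_of_le ha, sub_zero]

open scoped symmDiff in
lemma abs_layer_sub_layer {a b : ℝ} (ha : 0 ≤ a) (hb : 0 ≤ b) (t : ℝ) :
    |layer a t - layer b t| = (Set.uIoc a b).indicator 1 t := by
  have hsymm : Set.Ioc 0 a ∆ Set.Ioc 0 b = Set.uIoc a b := by
    ext s
    simp only [Set.mem_symmDiff, Set.mem_Ioc, Set.mem_uIoc]
    grind
  rw [layer, layer, ← Set.abs_indicator_symmDiff, hsymm]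
  exact abs_of_nonneg (Set.indicator_nonneg (fun _ _ => zero_le_one) t)

lemma integrable_abs_layer_sub_layer (a b : ℝ) : Integrable fun t => |layer a t - layer b t| :=
  ((integrable_layer a).sub (integrable_layer b)).abs

lemma integral_abs_layer_sub_layer {a b : ℝ} (ha : 0 ≤ a) (hb : 0 ≤ b) :
    ∫ t, |layer a t - layer b t| = |a - b| := by
  simp_rw [abs_layer_sub_layer ha hb]
  rw [integral_indicator_one measurableSet_uIoc, measureReal_def, Real.volume_uIoc,
    ENNReal.toReal_ofReal (abs_nonneg _), abs_sub_comm]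

theorem exists_lt_of_integral_lt {α : Type*} [MeasurableSpace α] {μ : Measure α} {F H : α → ℝ}
    (hF : Integrable F μ) (hH : Integrable H μ) (h : ∫ x, H x ∂μ < ∫ x, F x ∂μ) :
    ∃ x, H x < F x := by
  by_contra! hle
  exact (integral_mono hF hH hle).not_gt h

noncomputable def superlevelSet {α : Type*} (f : α →₀ ℝ) (t : ℝ) : Finset α :=
  f.support.filter (t ≤ f ·)

section SuperlevelSet

variable {α : Type*} {f : α →₀ ℝ} {t : ℝ}

lemma superlevelSet_subset_support : superlevelSet f t ⊆ f.support := filter_subset _ _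

lemma mem_superlevelSet (ht : 0 < t) {x : α} : x ∈ superlevelSet f t ↔ t ≤ f x := by
  simp only [superlevelSet, mem_filter, Finsupp.mem_support_iff, and_iff_right_iff_imp]
  exact fun h => (ht.trans_le h).ne'

lemma sum_layer_eq_card_superlevelSet (ht : 0 < t) :
    ∑ x ∈ f.support, layer (f x) t = #(superlevelSet f t) := by
  simp_rw [layer_of_pos ht]
  rw [sum_boole]
  rfl

lemma card_filter_notMem_superlevelSet_le (ht : 0 < t) (φ : α → α) :
    (#((superlevelSet f t).filter fun x => φ x ∉ superlevelSet f t) : ℝ) ≤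
      ∑ x ∈ f.support, |layer (f (φ x)) t - layer (f x) t| := by
  rw [card_eq_sum_ones, Nat.cast_sum]
  refine (sum_le_sum fun x hx => ?_).trans (sum_le_sum_of_subset_of_nonneg
    ((filter_subset _ _).trans superlevelSet_subset_support) fun _ _ _ => abs_nonneg _)
  obtain ⟨hxE, hφx⟩ := mem_filter.1 hx
  rw [layer_of_pos ht, layer_of_pos ht, if_pos ((mem_superlevelSet ht).1 hxE),
    if_neg (fun h => hφx ((mem_superlevelSet ht).2 h))]
  norm_num

end SuperlevelSet

theorem exists_sum_card_filter_notMem_superlevelSet_lt {α β : Type*} (f : α →₀ ℝ)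
    (hf : ∀ x, 0 ≤ f x) (S : Finset β) (φ : β → α → α) {c : ℝ}
    (h : ∑ g ∈ S, ∑ x ∈ f.support, |f (φ g x) - f x| < c * ∑ x ∈ f.support, f x) :
    ∃ t, ∑ g ∈ S, (#((superlevelSet f t).filter fun x => φ g x ∉ superlevelSet f t) : ℝ) <
      c * #(superlevelSet f t) := by
  set N : ℝ → ℝ := fun t => ∑ x ∈ f.support, layer (f x) t
  set B : ℝ → ℝ := fun t => ∑ g ∈ S, ∑ x ∈ f.support, |layer (f (φ g x)) t - layer (f x) t|
  have hN : Integrable N := integrable_finsetSum _ fun x _ => integrable_layer _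
  have hB : Integrable B := integrable_finsetSum _ fun g _ => integrable_finsetSum _
    fun x _ => integrable_abs_layer_sub_layer _ _
  have hN_integral : ∫ t, N t = ∑ x ∈ f.support, f x := by
    rw [integral_finsetSum _ fun x _ => integrable_layer _]
    exact sum_congr rfl fun x _ => integral_layer (hf x)
  have hB_integral : ∫ t, B t = ∑ g ∈ S, ∑ x ∈ f.support, |f (φ g x) - f x| := by
    rw [integral_finsetSum _ fun g _ => integrable_finsetSum _
      fun x _ => integrable_abs_layer_sub_layer _ _]
    refine sum_congr rfl fun g _ => ?_
    rw [integral_finsetSum _ fun x _ => integrable_abs_layer_sub_layer _ _]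
    exact sum_congr rfl fun x _ => integral_abs_layer_sub_layer (hf _) (hf _)
  obtain ⟨t, ht⟩ := exists_lt_of_integral_lt (hN.const_mul c) hB
    (by rwa [integral_const_mul, hN_integral, hB_integral])
  have ht0 : 0 < t := by
    by_contra! ht0
    simp [B, N, layer_of_nonpos _ ht0] at ht
  refine ⟨t, ?_⟩
  calc ∑ g ∈ S, (#((superlevelSet f t).filter fun x => φ g x ∉ superlevelSet f t) : ℝ)
      ≤ B t := sum_le_sum fun g _ => card_filter_notMem_superlevelSet_le ht0 (φ g)
    _ < c * N t := ht
    _ = c * #(superlevelSet f t) := congrArg (c * ·) (sum_layer_eq_card_superlevelSet ht0)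

lemma Finsupp.sum_support_abs_mul_sub_le_tsum {G : Type*} [Group G] (f : G →₀ ℝ) (g : G) :
    ∑ x ∈ f.support, |f (g * x) - f x| ≤ ∑' x, |f (g * x) - f x| := by
  refine Summable.sum_le_tsum _ (fun _ _ => abs_nonneg _) (summable_of_ne_finset_zero
    (s := f.support ∪ f.support.preimage (g * ·) (mul_right_injective g).injOn) fun x hx => ?_)
  simp only [mem_union, mem_preimage, Finsupp.mem_support_iff, not_or, not_not] at hx
  simp [hx.1, hx.2]

lemma card_mul_sdiff_le_sum_card_filter {α : Type*} [Mul α] (S E : Finset α) :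
    #((S * E) \ E) ≤ ∑ g ∈ S, #(E.filter fun x => g * x ∉ E) := by
  calc #((S * E) \ E)
      ≤ #(S.biUnion fun g => (E.filter fun x => g * x ∉ E).image (g * ·)) := by
        refine card_le_card fun y hy => ?_
        obtain ⟨hySE, hyE⟩ := mem_sdiff.1 hy
        obtain ⟨g, hg, x, hx, rfl⟩ := mem_mul.1 hySE
        exact mem_biUnion.2 ⟨g, hg, mem_image_of_mem _ (mem_filter.2 ⟨hx, hyE⟩)⟩
    _ ≤ ∑ g ∈ S, #((E.filter fun x => g * x ∉ E).image (g * ·)) := card_biUnion_le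
    _ ≤ ∑ g ∈ S, #(E.filter fun x => g * x ∉ E) := sum_le_sum fun _ _ => card_image_le

/-- If a class of groups satisfies the uniform Reiter condition (witnessed by a function `r`):
for all `ε > 0`, every group in the class and every finite subset `S` there is a finitely
supported probability measure `μ` with `|supp μ| ≤ r(ε,|S|)` and `‖λ*_g(μ) - μ‖_{ℓ¹} < ε` for
all `g ∈ S`, then it satisfies a uniform isoperimetric inequality: for every `ε' > 0`, every
group `G` of the class and every (nonempty) finite symmetric `S ⊆ G` there is a finite
`E ⊆ G` of size at most `r(ε'/|S|, |S|)` with `|∂_S E| ≤ ε'·|E|`. -/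
theorem uniformReiter_implies_uniformIsoperimetric {ι : Type*} (G : ι → Type*)
    [∀ i, Group (G i)] (r : ℝ → ℕ → ℕ)
    (hReiter : ∀ ε : ℝ, 0 < ε → ∀ i : ι, ∀ S : Finset (G i),
      ∃ μ : G i →₀ ℝ, (∀ x, 0 ≤ μ x) ∧ (μ.sum fun _ v => v) = 1 ∧
        μ.support.card ≤ r ε S.card ∧
        ∀ g ∈ S, (∑' x : G i, |μ (g * x) - μ x|) < ε) :
    ∀ ε' : ℝ, 0 < ε' → ∀ i : ι, ∀ S : Finset (G i), S.Nonempty → S = S⁻¹ →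
      ∃ E : Finset (G i), E.Nonempty ∧ E.card ≤ r (ε' / S.card) S.card ∧
        (((S * E) \ E).card : ℝ) ≤ ε' * E.card := by
  intro ε' hε' i S hS _
  have hS0 : (0 : ℝ) < #S := by exact_mod_cast hS.card_pos
  obtain ⟨μ, hμ0, hμ1, hμcard, hμS⟩ := hReiter (ε' / #S) (div_pos hε' hS0) i S
  have hdisp : ∑ g ∈ S, ∑ x ∈ μ.support, |μ (g * x) - μ x| < ε' * ∑ x ∈ μ.support, μ x :=
    calc _ ≤ ∑ g ∈ S, ∑' x, |μ (g * x) - μ x| :=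
          sum_le_sum fun g _ => μ.sum_support_abs_mul_sub_le_tsum g
      _ < ∑ _g ∈ S, ε' / #S := sum_lt_sum_of_nonempty hS hμS
      _ = ε' * ∑ x ∈ μ.support, μ x := by
          rw [show ∑ x ∈ μ.support, μ x = 1 from hμ1, sum_const, nsmul_eq_mul, mul_one,
            mul_div_cancel₀ _ hS0.ne']
  obtain ⟨t, hlt⟩ := exists_sum_card_filter_notMem_superlevelSet_lt μ hμ0 S (· * ·) hdisp
  set E := superlevelSet μ t
  have hE : (0 : ℝ) < #E :=
    pos_of_mul_pos_right ((sum_nonneg fun _ _ => Nat.cast_nonneg _).trans_lt hlt) hε'.le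
  refine ⟨E, card_pos.1 (by exact_mod_cast hE),
    (card_le_card superlevelSet_subset_support).trans hμcard, ?_⟩
  calc (#((S * E) \ E) : ℝ) ≤ ∑ g ∈ S, (#(E.filter fun x => g * x ∉ E) : ℝ) := by
        exact_mod_cast card_mul_sdiff_le_sum_card_filter S E
    _ ≤ ε' * #E := hlt.le
end

section
/- If a class of groups is uniformly amenable, then it satisfies the uniform Reiter condition, witnessed by taking uniform probability measures on suitable Følner sets. -/
open Pointwise

attribute [local instance] Classical.propDecidable

/-- A class of groups satisfies the *uniform Reiter condition* if there is
`r : ℝ_{>0} × ℕ → ℕ` such that for all `ε > 0`, every group of the class and every finite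
subset `S` there is a finitely supported probability measure `μ` with `|supp μ| ≤ r(ε,|S|)`
and `Σ_x |μ(gx) - μ(x)| < ε` for all `g ∈ S`. -/
def UniformReiterFamily {ι : Type*} (G : ι → Type*) [∀ i, Group (G i)] : Prop :=
  ∃ r : ℝ → ℕ → ℕ, ∀ ε : ℝ, 0 < ε → ∀ i : ι, ∀ S : Finset (G i),
    ∃ μ : G i →₀ ℝ, (∀ x, 0 ≤ μ x) ∧ (μ.sum fun _ v => v) = 1 ∧
      μ.support.card ≤ r ε S.card ∧
      ∀ g ∈ S, (∑' x : G i, |μ (g * x) - μ x|) < ε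

/-- If a class of groups is uniformly amenable, then it satisfies the uniform Reiter
condition (witnessed by uniform probability measures on suitable Følner sets). -/
theorem uniformlyAmenable_implies_uniformReiter {ι : Type*} (G : ι → Type*)
    [∀ i, Group (G i)] (h : UniformlyAmenableFamily G) : UniformReiterFamily G := by
  obtain ⟨m, hm⟩ := h
  refine ⟨fun ε n => max (m (ε/3) n) (m (ε/3) (n+1)), ?_⟩
  intro ε hε i S
  have hε3 : 0 < ε/3 := by linarith
  set S' : Finset (G i) := insert 1 S with hS'
  obtain ⟨F, hFne, hFcard, hFol⟩ := hm (ε/3) hε3 i S'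
  have hFpos : (0:ℝ) < F.card := by exact_mod_cast hFne.card_pos
  set c : ℝ := (F.card : ℝ)⁻¹ with hc
  have hcpos : 0 < c := inv_pos.2 hFpos
  set μ : G i →₀ ℝ := Finsupp.indicator F (fun _ _ => c) with hμ
  have hμapp : ∀ x, μ x = if x ∈ F then c else 0 := by
    intro x; by_cases hx : x ∈ F <;> simp [hμ, Finsupp.indicator_apply, hx]
  have hsupp : μ.support ⊆ F := by
    intro x hx
    by_contra hxF
    exact (Finsupp.mem_support_iff.1 hx) (by simp [hμapp, hxF])
  have hFsub : F ⊆ S' * F := by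
    intro x hx
    simpa using Finset.mul_mem_mul (Finset.mem_insert_self 1 S) hx
  refine ⟨μ, ?_, ?_, ?_, ?_⟩
  · intro x; rw [hμapp]; split
    · exact hcpos.le
    · exact le_refl 0
  · have h1 : (μ.sum fun _ v => v) = ∑ x ∈ F, μ x := by
      rw [Finsupp.sum]
      exact Finset.sum_subset hsupp (fun x _ hx => Finsupp.notMem_support_iff.1 hx)
    have h2 : ∑ x ∈ F, μ x = (F.card : ℝ) * c := by
      rw [Finset.sum_congr rfl (fun x hx => by rw [hμapp, if_pos hx])]
      simp [mul_comm]
    rw [h1, h2, hc, mul_inv_cancel₀ (ne_of_gt hFpos)]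
  · refine le_trans (Finset.card_le_card hsupp) (le_trans hFcard ?_)
    by_cases h1 : (1 : G i) ∈ S
    · rw [hS', Finset.insert_eq_self.2 h1]
      exact le_max_left _ _
    · rw [hS', Finset.card_insert_of_notMem h1]
      exact le_max_right _ _
  · intro g hgS
    have hg : g ∈ S' := Finset.mem_insert_of_mem hgS
    have hgFsub : g • F ⊆ S' * F := by
      intro x hx
      obtain ⟨y, hy, rfl⟩ := Finset.mem_smul_finset.1 hx
      simpa [smul_eq_mul] using Finset.mul_mem_mul hg hy
    set A : Finset (G i) := g⁻¹ • F with hA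
    have hμg : ∀ x, μ (g * x) = if x ∈ A then c else 0 := by
      intro x
      rw [hμapp]
      congr 1
      simp [hA, Finset.mem_inv_smul_finset_iff, smul_eq_mul, eq_iff_iff]
    set T : Finset (G i) := (A \ F) ∪ (F \ A) with hT
    have hzero : ∀ x ∉ T, |μ (g * x) - μ x| = 0 := by
      intro x hx
      rw [hT, Finset.mem_union, Finset.mem_sdiff, Finset.mem_sdiff] at hx
      push_neg at hx
      rw [hμg, hμapp]
      by_cases hxA : x ∈ A
      · rw [if_pos hxA, if_pos (hx.1 hxA), sub_self, abs_zero]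
      · by_cases hxF : x ∈ F
        · exact absurd (hx.2 hxF) hxA
        · rw [if_neg hxA, if_neg hxF, sub_self, abs_zero]
    have htsum : (∑' x : G i, |μ (g * x) - μ x|) = ∑ x ∈ T, |μ (g * x) - μ x| :=
      tsum_eq_sum hzero
    have hbound : ∀ x ∈ T, |μ (g * x) - μ x| ≤ c := by
      intro x _
      rw [hμg, hμapp, abs_sub_le_iff]
      constructor <;> (split_ifs <;> simp [hcpos.le])
    have hsum_le : ∑ x ∈ T, |μ (g * x) - μ x| ≤ (T.card : ℝ) * c :=
      le_trans (Finset.sum_le_card_nsmul T _ c hbound) (by rw [nsmul_eq_mul])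
    -- cardinality estimates
    have hgFcard : (g • F).card = F.card := Finset.card_smul_finset g F
    have hAF : (A \ F).card = (F \ g • F).card := by
      rw [← Finset.card_smul_finset g (A \ F), Finset.smul_finset_sdiff, hA,
        smul_inv_smul]
    have hFA : (F \ A).card = (g • F \ F).card := by
      rw [← Finset.card_smul_finset g (F \ A), Finset.smul_finset_sdiff, hA,
        smul_inv_smul]
    have k1 : (F \ g • F).card + F.card ≤ (S' * F).card := by
      rw [← hgFcard, Finset.card_sdiff_add_card]
      exact Finset.card_le_card (Finset.union_subset hFsub hgFsub)
    have k2 : (g • F \ F).card + F.card ≤ (S' * F).card := by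
      rw [Finset.card_sdiff_add_card]
      exact Finset.card_le_card (Finset.union_subset hgFsub hFsub)
    have hTcard : (T.card : ℝ) ≤ 2 * ((S' * F).card - F.card) := by
      have h3 : T.card ≤ (A \ F).card + (F \ A).card := Finset.card_union_le _ _
      have h4 : ((A \ F).card : ℝ) + (F \ A).card ≤ 2 * ((S' * F).card - F.card) := by
        rw [hAF, hFA]
        have k1' : ((F \ g • F).card : ℝ) + F.card ≤ (S' * F).card := by exact_mod_cast k1
        have k2' : ((g • F \ F).card : ℝ) + F.card ≤ (S' * F).card := by exact_mod_cast k2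
        linarith
      calc (T.card : ℝ) ≤ ((A \ F).card : ℝ) + (F \ A).card := by exact_mod_cast h3
        _ ≤ 2 * ((S' * F).card - F.card) := h4
    have hdiff : ((S' * F).card : ℝ) - F.card ≤ (ε/3) * F.card := by linarith
    have : (∑' x : G i, |μ (g * x) - μ x|) ≤ 2 * (ε/3) := by
      rw [htsum]
      calc ∑ x ∈ T, |μ (g * x) - μ x| ≤ (T.card : ℝ) * c := hsum_le
        _ ≤ (2 * ((ε/3) * F.card)) * c := by
            apply mul_le_mul_of_nonneg_right _ hcpos.le
            calc (T.card : ℝ) ≤ 2 * ((S' * F).card - F.card) := hTcard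
              _ ≤ 2 * ((ε/3) * F.card) := by linarith
        _ = 2 * (ε/3) * ((F.card : ℝ) * c) := by ring
        _ = 2 * (ε/3) := by rw [hc, mul_inv_cancel₀ (ne_of_gt hFpos), mul_one]
    linarith
end

section
/- Let μ be a finitely supported probability measure on a group G, let S ⊆ G be finite, and suppose Σ_{g∈S} ‖λ*_g(μ) − μ‖_{ℓ¹} < ε'. Then there exists t ∈ (0,1] such that the level set E_μ(t) = {g ∈ G : μ({g}) ≥ t} is nonempty and satisfies |∂_S E_μ(t)| ≤ ε' |E_μ(t)|. -/
open Pointwise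

attribute [local instance] Classical.propDecidable

noncomputable def predv (T : Finset ℝ) (t : ℝ) : ℝ :=
  if h : (T.filter (· < t)).Nonempty then (T.filter (· < t)).max' h else 0

noncomputable def topv (T : Finset ℝ) (r : ℝ) : ℝ :=
  if h : (T.filter (· ≤ r)).Nonempty then (T.filter (· ≤ r)).max' h else 0

lemma sum_gaps_aux (T : Finset ℝ) :
    ∀ (n : ℕ) (r : ℝ), (T.filter (· ≤ r)).card ≤ n →
      ∑ t ∈ T.filter (· ≤ r), (t - predv T t) = topv T r := by
  intro n
  induction n with
  | zero =>
    intro r hr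
    have h0 : T.filter (· ≤ r) = ∅ := Finset.card_eq_zero.mp (Nat.le_zero.mp hr)
    rw [h0, Finset.sum_empty, topv, dif_neg (by simp [h0])]
  | succ n ih =>
    intro r hr
    by_cases h : (T.filter (· ≤ r)).Nonempty
    · set m := (T.filter (· ≤ r)).max' h with hm
      have hmem : m ∈ T.filter (· ≤ r) := Finset.max'_mem _ h
      have hmT : m ∈ T := (Finset.mem_filter.mp hmem).1
      have hmr : m ≤ r := (Finset.mem_filter.mp hmem).2
      have hset : T.filter (· ≤ r) = insert m (T.filter (· < m)) := by
        ext t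
        simp only [Finset.mem_insert, Finset.mem_filter]
        constructor
        · rintro ⟨ht, htr⟩
          rcases lt_or_eq_of_le (Finset.le_max' (T.filter (· ≤ r)) t (Finset.mem_filter.mpr ⟨ht, htr⟩)) with h' | h'
          · exact Or.inr ⟨ht, h'⟩
          · exact Or.inl h'
        · rintro (rfl | ⟨ht, htm⟩)
          · exact ⟨hmT, hmr⟩
          · exact ⟨ht, le_trans (le_of_lt htm) hmr⟩
      have hnotmem : m ∉ T.filter (· < m) := by simp
      have htopr : topv T r = m := by rw [topv, dif_pos h]
      by_cases h2 : (T.filter (· < m)).Nonempty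
      · set m' := (T.filter (· < m)).max' h2 with hm'
        have hm'mem : m' ∈ T.filter (· < m) := Finset.max'_mem _ h2
        have hm'lt : m' < m := (Finset.mem_filter.mp hm'mem).2
        have hset2 : T.filter (· < m) = T.filter (· ≤ m') := by
          ext t
          simp only [Finset.mem_filter]
          constructor
          · rintro ⟨ht, htm⟩
            exact ⟨ht, Finset.le_max' (T.filter (· < m)) t (Finset.mem_filter.mpr ⟨ht, htm⟩)⟩
          · rintro ⟨ht, htm'⟩
            exact ⟨ht, lt_of_le_of_lt htm' hm'lt⟩
        have h2' : (T.filter (· ≤ m')).Nonempty := hset2 ▸ h2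
        have hpredm : predv T m = m' := by rw [predv, dif_pos h2]
        have htop' : topv T m' = m' := by
          rw [topv, dif_pos h2']
          apply le_antisymm
          · exact Finset.max'_le _ _ _ (fun y hy => (Finset.mem_filter.mp hy).2)
          · exact Finset.le_max' _ _ (hset2 ▸ hm'mem)
        have hcard : (T.filter (· ≤ m')).card ≤ n := by
          have hc : (T.filter (· ≤ r)).card = (T.filter (· ≤ m')).card + 1 := by
            rw [hset, hset2, Finset.card_insert_of_notMem (hset2 ▸ hnotmem)]
          omega
        rw [hset, Finset.sum_insert hnotmem, hset2, ih m' hcard, htop', htopr, hpredm]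
        ring
      · have hpredm : predv T m = 0 := by rw [predv, dif_neg h2]
        have hempty : T.filter (· < m) = ∅ := Finset.not_nonempty_iff_eq_empty.mp h2
        rw [hset, Finset.sum_insert hnotmem, hempty, Finset.sum_empty, hpredm, htopr]
        ring
    · have hempty : T.filter (· ≤ r) = ∅ := Finset.not_nonempty_iff_eq_empty.mp h
      rw [hempty, Finset.sum_empty, topv, dif_neg h]

lemma sum_gaps (T : Finset ℝ) (r : ℝ) :
    ∑ t ∈ T.filter (· ≤ r), (t - predv T t) = topv T r :=
  sum_gaps_aux T _ r le_rfl

/-- Let `μ` be a finitely supported probability measure on a group `G`, let `S ⊆ G` be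
finite, and suppose `Σ_{g ∈ S} ‖λ*_g(μ) − μ‖_{ℓ¹} < ε'`.  Then there is `t ∈ (0,1]` such
that the level set `E_μ(t) = {g : μ(g) ≥ t}` is nonempty and `|∂_S E_μ(t)| ≤ ε'·|E_μ(t)|`. -/
theorem exists_level_set_isoperimetric {G : Type*} [Group G] (μ : G →₀ ℝ)
    (hpos : ∀ x, 0 ≤ μ x) (htotal : (μ.sum fun _ v => v) = 1)
    (S : Finset G) (ε' : ℝ) (hε' : 0 < ε')
    (hsum : (∑ g ∈ S, ∑' x : G, |μ (g * x) - μ x|) < ε') :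
    ∃ t : ℝ, 0 < t ∧ t ≤ 1 ∧
      (μ.support.filter fun x => t ≤ μ x).Nonempty ∧
      (((S * (μ.support.filter fun x => t ≤ μ x)) \
          (μ.support.filter fun x => t ≤ μ x)).card : ℝ) ≤
        ε' * (μ.support.filter fun x => t ≤ μ x).card := by
  set P := μ.support with hP
  set T := P.image μ with hT
  set F : Finset G := P ∪ S.biUnion (fun g => P.image (fun y => g⁻¹ * y)) with hF
  have hTpos : ∀ t ∈ T, 0 < t := by
    intro t ht
    rw [hT] at ht
    obtain ⟨x, hx, rfl⟩ := Finset.mem_image.mp ht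
    exact lt_of_le_of_ne (hpos x) (Ne.symm (Finsupp.mem_support_iff.mp hx))
  have hone' : ∑ x ∈ P, μ x = 1 := by rw [← htotal]; rfl
  have hμle1 : ∀ x, μ x ≤ 1 := by
    intro x
    by_cases hx : x ∈ P
    · rw [← hone']
      exact Finset.single_le_sum (fun i _ => hpos i) hx
    · rw [Finsupp.notMem_support_iff.mp hx]; exact zero_le_one
  have hwpos : ∀ t ∈ T, 0 < t - predv T t := by
    intro t ht
    rw [predv]
    split_ifs with h
    · have h1 := Finset.max'_mem _ h
      have h2 : (T.filter (· < t)).max' h < t := (Finset.mem_filter.mp h1).2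
      linarith
    · simpa using hTpos t ht
  have htopx : ∀ x : G, topv T (μ x) = μ x := by
    intro x
    by_cases hx : x ∈ P
    · have hmem : μ x ∈ T.filter (· ≤ μ x) :=
        Finset.mem_filter.mpr ⟨Finset.mem_image_of_mem μ hx, le_refl _⟩
      have hne : (T.filter (· ≤ μ x)).Nonempty := ⟨μ x, hmem⟩
      rw [topv, dif_pos hne]
      exact le_antisymm (Finset.max'_le _ _ _ (fun y hy => (Finset.mem_filter.mp hy).2))
        (Finset.le_max' _ _ hmem)
    · have h0 : μ x = 0 := Finsupp.notMem_support_iff.mp hx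
      rw [h0, topv, dif_neg]
      rintro ⟨t, ht⟩
      obtain ⟨ht1, ht2⟩ := Finset.mem_filter.mp ht
      exact absurd ht2 (not_le.mpr (hTpos t ht1))
  have hstep1 : ∀ x : G,
      ∑ t ∈ T, (t - predv T t) * (if t ≤ μ x then (1:ℝ) else 0) = μ x := by
    intro x
    have : ∀ t ∈ T, (t - predv T t) * (if t ≤ μ x then (1:ℝ) else 0) =
        if t ≤ μ x then (t - predv T t) else 0 := by
      intro t _; split_ifs <;> ring
    rw [Finset.sum_congr rfl this, ← Finset.sum_filter, sum_gaps, htopx]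
  have habskey : ∀ a b : G, μ b ≤ μ a →
      ∑ t ∈ T, (t - predv T t) *
        |(if t ≤ μ a then (1:ℝ) else 0) - (if t ≤ μ b then (1:ℝ) else 0)| = μ a - μ b := by
    intro a b hba
    have h1 : ∀ t ∈ T, (t - predv T t) *
        |(if t ≤ μ a then (1:ℝ) else 0) - (if t ≤ μ b then (1:ℝ) else 0)| =
        (t - predv T t) * (if t ≤ μ a then (1:ℝ) else 0) -
        (t - predv T t) * (if t ≤ μ b then (1:ℝ) else 0) := by
      intro t _
      by_cases h2 : t ≤ μ b
      · have h3 : t ≤ μ a := le_trans h2 hba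
        simp [h2, h3]
      · by_cases h3 : t ≤ μ a <;> simp [h2, h3] <;> ring
    rw [Finset.sum_congr rfl h1, Finset.sum_sub_distrib, hstep1, hstep1]
  have habs : ∀ a b : G,
      ∑ t ∈ T, (t - predv T t) *
        |(if t ≤ μ a then (1:ℝ) else 0) - (if t ≤ μ b then (1:ℝ) else 0)| = |μ a - μ b| := by
    intro a b
    rcases le_total (μ b) (μ a) with h | h
    · rw [habskey a b h, abs_of_nonneg (by linarith)]
    · have hcomm : ∀ t : ℝ,
          |(if t ≤ μ a then (1:ℝ) else 0) - (if t ≤ μ b then (1:ℝ) else 0)| =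
          |(if t ≤ μ b then (1:ℝ) else 0) - (if t ≤ μ a then (1:ℝ) else 0)| := by
        intro t; rw [abs_sub_comm]
      simp_rw [hcomm]
      rw [habskey b a h, abs_sub_comm, abs_of_nonneg (by linarith)]
  have hcardE : ∀ t : ℝ, ((P.filter fun x => t ≤ μ x).card : ℝ) =
      ∑ x ∈ P, (if t ≤ μ x then (1:ℝ) else 0) := by
    intro t
    rw [Finset.card_filter]
    push_cast
    exact Finset.sum_congr rfl (fun x _ => by split_ifs <;> simp)
  have honeE : ∑ t ∈ T, (t - predv T t) * ((P.filter fun x => t ≤ μ x).card : ℝ) = 1 := by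
    calc ∑ t ∈ T, (t - predv T t) * ((P.filter fun x => t ≤ μ x).card : ℝ)
        = ∑ t ∈ T, ∑ x ∈ P, (t - predv T t) * (if t ≤ μ x then (1:ℝ) else 0) := by
          refine Finset.sum_congr rfl (fun t _ => ?_)
          rw [hcardE, Finset.mul_sum]
      _ = ∑ x ∈ P, ∑ t ∈ T, (t - predv T t) * (if t ≤ μ x then (1:ℝ) else 0) :=
          Finset.sum_comm
      _ = ∑ x ∈ P, μ x := Finset.sum_congr rfl (fun x _ => hstep1 x)
      _ = 1 := hone'
  have hbd : ∀ t : ℝ, 0 < t →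
      (((S * (P.filter fun x => t ≤ μ x)) \ (P.filter fun x => t ≤ μ x)).card : ℝ) ≤
        ∑ g ∈ S, ∑ y ∈ F,
          |(if t ≤ μ (g * y) then (1:ℝ) else 0) - (if t ≤ μ y then (1:ℝ) else 0)| := by
    intro t ht
    set E := P.filter fun x => t ≤ μ x with hE
    set D : G → Finset G := fun g => F.filter (fun y => t ≤ μ y ∧ ¬ t ≤ μ (g * y)) with hD
    have hsub : (S * E) \ E ⊆ S.biUnion (fun g => (D g).image (g * ·)) := by
      intro x hx
      obtain ⟨hx1, hx2⟩ := Finset.mem_sdiff.mp hx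
      obtain ⟨g, hg, e, he, rfl⟩ := Finset.mem_mul.mp hx1
      refine Finset.mem_biUnion.mpr ⟨g, hg, Finset.mem_image.mpr ⟨e, ?_, rfl⟩⟩
      refine Finset.mem_filter.mpr ⟨Finset.mem_union_left _ (Finset.mem_filter.mp he).1,
        (Finset.mem_filter.mp he).2, fun hc => hx2 ?_⟩
      exact Finset.mem_filter.mpr
        ⟨Finsupp.mem_support_iff.mpr (ne_of_gt (lt_of_lt_of_le ht hc)), hc⟩
    have hc1 : ((S * E) \ E).card ≤ ∑ g ∈ S, (D g).card :=
      calc ((S * E) \ E).card ≤ (S.biUnion (fun g => (D g).image (g * ·))).card :=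
            Finset.card_le_card hsub
        _ ≤ ∑ g ∈ S, ((D g).image (g * ·)).card := Finset.card_biUnion_le
        _ ≤ ∑ g ∈ S, (D g).card := Finset.sum_le_sum (fun g _ => Finset.card_image_le)
    have hc2 : ∀ g ∈ S, ((D g).card : ℝ) ≤ ∑ y ∈ F,
        |(if t ≤ μ (g * y) then (1:ℝ) else 0) - (if t ≤ μ y then (1:ℝ) else 0)| := by
      intro g _
      have he1 : ((D g).card : ℝ) = ∑ y ∈ D g, (1:ℝ) := by simp
      rw [he1]
      calc ∑ y ∈ D g, (1:ℝ)
          = ∑ y ∈ D g,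
            |(if t ≤ μ (g * y) then (1:ℝ) else 0) - (if t ≤ μ y then (1:ℝ) else 0)| := by
            refine Finset.sum_congr rfl (fun y hy => ?_)
            obtain ⟨_, h1, h2⟩ := Finset.mem_filter.mp hy
            simp [h1, h2]
        _ ≤ ∑ y ∈ F,
            |(if t ≤ μ (g * y) then (1:ℝ) else 0) - (if t ≤ μ y then (1:ℝ) else 0)| :=
            Finset.sum_le_sum_of_subset_of_nonneg (Finset.filter_subset _ _)
              (fun _ _ _ => abs_nonneg _)
    calc (((S * E) \ E).card : ℝ) ≤ ((∑ g ∈ S, (D g).card : ℕ) : ℝ) := by exact_mod_cast hc1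
      _ = ∑ g ∈ S, ((D g).card : ℝ) := by push_cast; rfl
      _ ≤ _ := Finset.sum_le_sum hc2
  have hkey : ∑ g ∈ S, ∑ y ∈ F, |μ (g * y) - μ y| < ε' := by
    have heq : ∀ g ∈ S, ∑ y ∈ F, |μ (g * y) - μ y| = ∑' x : G, |μ (g * x) - μ x| := by
      intro g hg
      refine (tsum_eq_sum ?_).symm
      intro x hx
      have hx1 : μ x = 0 := by
        by_contra h
        exact hx (Finset.mem_union_left _ (Finsupp.mem_support_iff.mpr h))
      have hx2 : μ (g * x) = 0 := by
        by_contra h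
        refine hx (Finset.mem_union_right _ (Finset.mem_biUnion.mpr
          ⟨g, hg, Finset.mem_image.mpr ⟨g * x, Finsupp.mem_support_iff.mpr h, ?_⟩⟩))
        group
      rw [hx1, hx2]; simp
    calc ∑ g ∈ S, ∑ y ∈ F, |μ (g * y) - μ y|
        = ∑ g ∈ S, ∑' x : G, |μ (g * x) - μ x| := Finset.sum_congr rfl heq
      _ < ε' := hsum
  have hmain : ∑ t ∈ T, (t - predv T t) *
      (((S * (P.filter fun x => t ≤ μ x)) \ (P.filter fun x => t ≤ μ x)).card : ℝ) <
      ∑ t ∈ T, ε' * ((t - predv T t) * ((P.filter fun x => t ≤ μ x).card : ℝ)) := by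
    have hle : ∑ t ∈ T, (t - predv T t) *
        (((S * (P.filter fun x => t ≤ μ x)) \ (P.filter fun x => t ≤ μ x)).card : ℝ) ≤
        ∑ g ∈ S, ∑ y ∈ F, |μ (g * y) - μ y| := by
      calc ∑ t ∈ T, (t - predv T t) *
          (((S * (P.filter fun x => t ≤ μ x)) \ (P.filter fun x => t ≤ μ x)).card : ℝ)
          ≤ ∑ t ∈ T, (t - predv T t) * (∑ g ∈ S, ∑ y ∈ F,
            |(if t ≤ μ (g * y) then (1:ℝ) else 0) - (if t ≤ μ y then (1:ℝ) else 0)|) :=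
            Finset.sum_le_sum (fun t ht =>
              mul_le_mul_of_nonneg_left (hbd t (hTpos t ht)) (le_of_lt (hwpos t ht)))
        _ = ∑ g ∈ S, ∑ y ∈ F, ∑ t ∈ T, (t - predv T t) *
            |(if t ≤ μ (g * y) then (1:ℝ) else 0) - (if t ≤ μ y then (1:ℝ) else 0)| := by
            simp_rw [Finset.mul_sum]
            rw [Finset.sum_comm]
            exact Finset.sum_congr rfl (fun g _ => Finset.sum_comm)
        _ = ∑ g ∈ S, ∑ y ∈ F, |μ (g * y) - μ y| :=
            Finset.sum_congr rfl (fun g _ => Finset.sum_congr rfl (fun y _ => habs _ _))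
    have hre : ∑ t ∈ T, ε' * ((t - predv T t) * ((P.filter fun x => t ≤ μ x).card : ℝ)) =
        ε' := by
      rw [← Finset.mul_sum, honeE, mul_one]
    rw [hre]
    exact lt_of_le_of_lt hle hkey
  obtain ⟨t, htT, hlt⟩ := Finset.exists_lt_of_sum_lt hmain
  have hw : 0 < t - predv T t := hwpos t htT
  have hcardlt : (((S * (P.filter fun x => t ≤ μ x)) \ (P.filter fun x => t ≤ μ x)).card : ℝ) <
      ε' * ((P.filter fun x => t ≤ μ x).card : ℝ) := by
    have h2 : (t - predv T t) *
        (((S * (P.filter fun x => t ≤ μ x)) \ (P.filter fun x => t ≤ μ x)).card : ℝ) <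
        (t - predv T t) * (ε' * ((P.filter fun x => t ≤ μ x).card : ℝ)) := by
      calc _ < ε' * ((t - predv T t) * ((P.filter fun x => t ≤ μ x).card : ℝ)) := hlt
        _ = _ := by ring
    exact (mul_lt_mul_iff_right₀ hw).mp h2
  obtain ⟨x, hxP, hxt⟩ := Finset.mem_image.mp (hT ▸ htT)
  refine ⟨t, hTpos t htT, ?_, ⟨x, Finset.mem_filter.mpr ⟨hxP, le_of_eq hxt.symm⟩⟩,
    le_of_lt hcardlt⟩
  rw [← hxt]
  exact hμle1 x
end

section
/- The class of quotients of groups from a class satisfying the uniform Reiter condition also satisfies the uniform Reiter condition with the same function r: if μ' is a finitely supported probability measure on G with ‖λ*_g(μ') − μ'‖_{ℓ¹} < ε for all g in a finite set S' ⊆ G, and π : G → G/N is the canonical projection, then the pushforward μ = π_*(μ') satisfies |supp(μ)| ≤ |supp(μ')| and ‖λ*_{π(g)}(μ) − μ‖_{ℓ¹} ≤ ‖λ*_g(μ') − μ'‖_{ℓ¹} < ε for all g ∈ S'. -/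
/-- Pushing forward a Reiter measure along a surjective homomorphism `π : G → G/N` (here an
arbitrary surjective group homomorphism `π : G →* H`): if `μ'` is a finitely supported
probability measure on `G` with `‖λ*_g(μ') − μ'‖_{ℓ¹} < ε` for all `g` in a finite set
`S' ⊆ G`, then the pushforward `μ = π_*(μ')` is a finitely supported probability measure with
`|supp μ| ≤ |supp μ'|` and `‖λ*_{π(g)}(μ) − μ‖_{ℓ¹} ≤ ‖λ*_g(μ') − μ'‖_{ℓ¹} < ε` for all
`g ∈ S'`.  In particular the class of quotients of groups of a class satisfying the uniform
Reiter condition satisfies the uniform Reiter condition with the same function `r`. -/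
theorem pushforward_reiter {G H : Type*} [Group G] [Group H] (π : G →* H)
    (hπ : Function.Surjective π) (μ' : G →₀ ℝ)
    (hpos : ∀ x, 0 ≤ μ' x) (htotal : (μ'.sum fun _ v => v) = 1)
    (S' : Finset G) (ε : ℝ)
    (hReiter : ∀ g ∈ S', (∑' x : G, |μ' (g * x) - μ' x|) < ε) :
    (∀ y, 0 ≤ Finsupp.mapDomain π μ' y) ∧
    ((Finsupp.mapDomain π μ').sum fun _ v => v) = 1 ∧
    (Finsupp.mapDomain π μ').support.card ≤ μ'.support.card ∧
    ∀ g ∈ S',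
      (∑' y : H, |Finsupp.mapDomain π μ' (π g * y) - Finsupp.mapDomain π μ' y|) ≤
        (∑' x : G, |μ' (g * x) - μ' x|) ∧
      (∑' y : H, |Finsupp.mapDomain π μ' (π g * y) - Finsupp.mapDomain π μ' y|) < ε := by
  classical
  have hmap : ∀ y : H, Finsupp.mapDomain π μ' y
      = ∑ x ∈ μ'.support.filter (fun x => π x = y), μ' x := by
    intro y
    rw [Finsupp.mapDomain, Finsupp.sum_apply, Finsupp.sum, Finset.sum_filter]
    exact Finset.sum_congr rfl fun x _ => Finsupp.single_apply
  refine ⟨?_, ?_, ?_, ?_⟩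
  · intro y
    rw [hmap]
    exact Finset.sum_nonneg fun x _ => hpos x
  · rw [Finsupp.sum_mapDomain_index (fun _ => rfl) (fun _ _ _ => rfl)]
    exact htotal
  · exact le_trans (Finset.card_le_card (Finsupp.mapDomain_support))
      Finset.card_image_le
  · intro g hg
    set T : Finset G := μ'.support.image (fun x => g⁻¹ * x) ∪ μ'.support with hT
    set U : Finset H := T.image π with hU
    have hsuppT : μ'.support ⊆ T := Finset.subset_union_right
    -- zero outside T
    have hF0 : ∀ x ∉ T, μ' (g * x) - μ' x = 0 := by
      intro x hx
      have hx1 : μ' x = 0 := by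
        by_contra h
        exact hx (hsuppT (Finsupp.mem_support_iff.mpr h))
      have hx2 : μ' (g * x) = 0 := by
        by_contra h
        apply hx
        refine Finset.mem_union_left _ (Finset.mem_image.mpr ⟨g * x, Finsupp.mem_support_iff.mpr h, ?_⟩)
        group
      rw [hx1, hx2, sub_zero]
    have htsumG : (∑' x : G, |μ' (g * x) - μ' x|) = ∑ x ∈ T, |μ' (g * x) - μ' x| :=
      tsum_eq_sum (fun x hx => by rw [hF0 x hx, abs_zero])
    -- key fiber formula
    have key : ∀ y : H, Finsupp.mapDomain π μ' (π g * y) - Finsupp.mapDomain π μ' y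
        = ∑ x ∈ T.filter (fun x => π x = y), (μ' (g * x) - μ' x) := by
      intro y
      rw [Finset.sum_sub_distrib]
      have h1 : Finsupp.mapDomain π μ' y = ∑ x ∈ T.filter (fun x => π x = y), μ' x := by
        rw [hmap]
        refine Finset.sum_subset (Finset.filter_subset_filter _ hsuppT) ?_
        intro x _ hx
        by_contra h
        exact hx (Finset.mem_filter.mpr ⟨Finsupp.mem_support_iff.mpr
          (fun h0 => h (by rw [h0])), by
            rcases Finset.mem_filter.mp ‹x ∈ T.filter (fun x => π x = y)› with ⟨_, h2⟩
            exact h2⟩)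
      have h2 : Finsupp.mapDomain π μ' (π g * y)
          = ∑ x ∈ T.filter (fun x => π x = y), μ' (g * x) := by
        rw [hmap]
        have himg : ∑ x ∈ T.filter (fun x => π x = y), μ' (g * x)
            = ∑ z ∈ (T.filter (fun x => π x = y)).image (fun x => g * x), μ' z :=
          (Finset.sum_image (fun a _ b _ h => by
            have := congrArg (fun t => g⁻¹ * t) h
            simpa using this)).symm
        rw [himg]
        refine Finset.sum_subset ?_ ?_
        · intro z hz
          rcases Finset.mem_filter.mp hz with ⟨hz1, hz2⟩
          refine Finset.mem_image.mpr ⟨g⁻¹ * z, Finset.mem_filter.mpr ⟨?_, ?_⟩, by group⟩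
          · exact Finset.mem_union_left _ (Finset.mem_image.mpr ⟨z, hz1, rfl⟩)
          · simp only [map_mul, map_inv, hz2]
            group
        · intro z hz hz2
          by_contra h
          apply hz2
          rcases Finset.mem_image.mp hz with ⟨x, hx, rfl⟩
          rcases Finset.mem_filter.mp hx with ⟨_, hx2⟩
          refine Finset.mem_filter.mpr ⟨Finsupp.mem_support_iff.mpr h, ?_⟩
          rw [map_mul, hx2]
      rw [h1, h2]
    have hΔ0 : ∀ y ∉ U, Finsupp.mapDomain π μ' (π g * y) - Finsupp.mapDomain π μ' y = 0 := by
      intro y hy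
      rw [key y]
      apply Finset.sum_eq_zero
      intro x hx
      rcases Finset.mem_filter.mp hx with ⟨hx1, hx2⟩
      exact absurd (Finset.mem_image.mpr ⟨x, hx1, hx2⟩) hy
    have htsumH : (∑' y : H, |Finsupp.mapDomain π μ' (π g * y) - Finsupp.mapDomain π μ' y|)
        = ∑ y ∈ U, |Finsupp.mapDomain π μ' (π g * y) - Finsupp.mapDomain π μ' y| :=
      tsum_eq_sum (fun y hy => by rw [hΔ0 y hy, abs_zero])
    have hle : (∑' y : H, |Finsupp.mapDomain π μ' (π g * y) - Finsupp.mapDomain π μ' y|) ≤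
        (∑' x : G, |μ' (g * x) - μ' x|) := by
      rw [htsumH, htsumG]
      calc ∑ y ∈ U, |Finsupp.mapDomain π μ' (π g * y) - Finsupp.mapDomain π μ' y|
          ≤ ∑ y ∈ U, ∑ x ∈ T.filter (fun x => π x = y), |μ' (g * x) - μ' x| := by
            refine Finset.sum_le_sum fun y _ => ?_
            rw [key y]
            exact Finset.abs_sum_le_sum_abs _ _
        _ = ∑ x ∈ T, |μ' (g * x) - μ' x| :=
            Finset.sum_fiberwise_of_maps_to (fun x hx => Finset.mem_image.mpr ⟨x, hx, rfl⟩) _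
    exact ⟨hle, lt_of_le_of_lt hle (hReiter g hg)⟩
end

section
/- Let G be a group and let ℱ be a filter base of normal subgroups of G with trivial intersection. If the class {G/N : N ∈ ℱ} is uniformly amenable, then G is uniformly amenable. -/
open Pointwise

attribute [local instance] Classical.propDecidable

/-- A single group is uniformly amenable. -/
def UniformlyAmenableGroup (G : Type*) [Group G] : Prop :=
  ∃ m : ℝ → ℕ → ℕ, ∀ ε : ℝ, 0 < ε → ∀ S : Finset G,
    ∃ F : Finset G, F.Nonempty ∧ F.card ≤ m ε S.card ∧
      ((S * F).card : ℝ) ≤ (1 + ε) * F.card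

namespace UAQuotAux

variable {G : Type*} [Group G] {ι : Type*} (N : ι → Subgroup G) [∀ i, (N i).Normal]
  (U : Ultrafilter ι)

/-- The "U-a.e. trivial" subgroup of the product. -/
def K : Subgroup (∀ i, G ⧸ N i) where
  carrier := {x | ∀ᶠ i in (U : Filter ι), x i = 1}
  one_mem' := Filter.Eventually.of_forall fun _ => rfl
  mul_mem' := by
    intro a b ha hb
    filter_upwards [ha, hb] with i h1 h2
    simp [Pi.mul_apply, h1, h2]
  inv_mem' := by
    intro a ha
    filter_upwards [ha] with i h
    simp [Pi.inv_apply, h]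

lemma mem_K {x : ∀ i, G ⧸ N i} : x ∈ K N U ↔ ∀ᶠ i in (U : Filter ι), x i = 1 := Iff.rfl

instance : (K N U).Normal := by
  constructor
  intro x hx g
  rw [mem_K] at hx ⊢
  filter_upwards [hx] with i h
  simp [Pi.mul_apply, Pi.inv_apply, h]

/-- The ultraproduct-like group. -/
abbrev H := (∀ i, G ⧸ N i) ⧸ (K N U)

/-- Diagonal map into the product. -/
def ψ : G →* ∀ i, G ⧸ N i where
  toFun g := fun i => (g : G ⧸ N i)
  map_one' := rfl
  map_mul' _ _ := rfl

/-- Diagonal map into the ultraproduct. -/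
def φ : G →* H N U := (QuotientGroup.mk' (K N U)).comp (ψ N)

lemma φ_injective (htriv : ∀ g : G, (∀ i, g ∈ N i) → g = 1)
    (hUB : ∀ i : ι, {j | N j ≤ N i} ∈ U) :
    Function.Injective (φ N U) := by
  rw [injective_iff_map_eq_one]
  intro g hg
  have h1 : ψ N g ∈ K N U := (QuotientGroup.eq_one_iff _).1 hg
  rw [mem_K] at h1
  refine htriv g fun i => ?_
  have h2 : {j | N j ≤ N i} ∩ {j | (g : G ⧸ N j) = 1} ∈ U :=
    Filter.inter_mem (hUB i) h1
  obtain ⟨j, hj1, hj2⟩ := Filter.nonempty_of_mem h2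
  exact hj1 ((QuotientGroup.eq_one_iff g).1 hj2)

/-- If `v` separates at least as much as `u` on `T`, then the image of `u` is smaller. -/
lemma card_image_le_image {α β γ : Type*} [DecidableEq β] [DecidableEq γ] (T : Finset α) (v : α → β) (u : α → γ)
    (h : ∀ p ∈ T, ∀ q ∈ T, v p = v q → u p = u q) :
    (T.image u).card ≤ (T.image v).card := by
  classical
  rcases T.eq_empty_or_nonempty with rfl | ⟨p₀, hp₀⟩
  · simp
  · set f : β → γ := fun y => if hy : ∃ p, p ∈ T ∧ v p = y then u hy.choose else u p₀ with hf
    have hsub : T.image u ⊆ (T.image v).image f := by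
      intro z hz
      rcases Finset.mem_image.1 hz with ⟨p, hp, rfl⟩
      refine Finset.mem_image.2 ⟨v p, Finset.mem_image_of_mem _ hp, ?_⟩
      have hy : ∃ q, q ∈ T ∧ v q = v p := ⟨p, hp, rfl⟩
      simp only [hf, dif_pos hy]
      exact h _ hy.choose_spec.1 _ hp hy.choose_spec.2
    calc (T.image u).card ≤ ((T.image v).image f).card := Finset.card_le_card hsub
      _ ≤ (T.image v).card := Finset.card_image_le

/-- Følner set for a subgroup from a Følner set in the big group: coset decomposition trick. -/
lemma exists_coset_folner {H : Type*} [Group H] [DecidableEq H] (Γ : Subgroup H) (A F₀ : Finset H)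
    (hA : ∀ a ∈ A, a ∈ Γ) (hF₀ : F₀.Nonempty) {ε : ℝ}
    (hfol : ((A * F₀).card : ℝ) ≤ (1 + ε) * F₀.card) :
    ∃ F' : Finset H, F'.Nonempty ∧ F'.card ≤ F₀.card ∧ (∀ z ∈ F', z ∈ Γ) ∧
      ((A * F').card : ℝ) ≤ (1 + ε) * F'.card := by
  classical
  set qc : H → Quotient (QuotientGroup.rightRel Γ) := Quotient.mk _ with hqcdef
  have hqc : ∀ x y : H, qc x = qc y ↔ y * x⁻¹ ∈ Γ := by
    intro x y
    constructor
    · intro hxy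
      exact QuotientGroup.rightRel_apply.mp (Quotient.exact hxy)
    · intro hxy
      exact Quotient.sound ((QuotientGroup.rightRel_apply).2 hxy)
  have hmulq : ∀ a ∈ A, ∀ b : H, qc (a * b) = qc b := by
    intro a ha b
    rw [hqc]
    simpa using hA a ha
  set C : Finset _ := F₀.image qc with hC
  set Fc : _ → Finset H := fun c => F₀.filter (fun f => qc f = c) with hFc
  have hcard1 : F₀.card = ∑ c ∈ C, (Fc c).card :=
    Finset.card_eq_sum_card_fiberwise (fun x hx => Finset.mem_image_of_mem qc hx)
  have hfiber : ∀ c, (A * F₀).filter (fun z => qc z = c) = A * Fc c := by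
    intro c
    ext z
    simp only [Finset.mem_filter, Finset.mem_mul, hFc]
    constructor
    · rintro ⟨⟨a, ha, b, hb, rfl⟩, hz⟩
      exact ⟨a, ha, b, ⟨hb, by rw [← hmulq a ha b]; exact hz⟩, rfl⟩
    · rintro ⟨a, ha, b, hb, rfl⟩
      exact ⟨⟨a, ha, b, hb.1, rfl⟩, by rw [hmulq a ha b, hb.2]⟩
  have hcard2 : (A * F₀).card = ∑ c ∈ C, (A * Fc c).card := by
    rw [Finset.card_eq_sum_card_fiberwise (f := qc) (t := C) ?_]
    · exact Finset.sum_congr rfl fun c _ => by rw [hfiber c]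
    · intro z hz
      rcases Finset.mem_mul.1 hz with ⟨a, ha, b, hb, rfl⟩
      rw [hmulq a ha b]
      exact Finset.mem_image_of_mem qc hb
  have hCne : C.Nonempty := hF₀.image qc
  have hex : ∃ c ∈ C, ((A * Fc c).card : ℝ) ≤ (1 + ε) * (Fc c).card := by
    by_contra hcon
    push_neg at hcon
    have hlt : ∑ c ∈ C, ((1 + ε) * ((Fc c).card : ℝ)) < ∑ c ∈ C, ((A * Fc c).card : ℝ) :=
      Finset.sum_lt_sum_of_nonempty hCne hcon
    rw [← Finset.mul_sum] at hlt
    have e1 : (∑ c ∈ C, ((Fc c).card : ℝ)) = (F₀.card : ℝ) := by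
      rw [hcard1]; push_cast; ring
    have e2 : (∑ c ∈ C, ((A * Fc c).card : ℝ)) = ((A * F₀).card : ℝ) := by
      rw [hcard2]; push_cast; ring
    rw [e1, e2] at hlt
    linarith
  obtain ⟨c, hcC, hc⟩ := hex
  obtain ⟨h₀, hh₀⟩ : ∃ h₀, h₀ ∈ Fc c := by
    rcases Finset.mem_image.1 hcC with ⟨f, hf, hqf⟩
    exact ⟨f, Finset.mem_filter.2 ⟨hf, hqf⟩⟩
  refine ⟨Fc c * {h₀⁻¹}, ⟨h₀ * h₀⁻¹, Finset.mul_mem_mul hh₀ (Finset.mem_singleton_self _)⟩,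
    ?_, ?_, ?_⟩
  · rw [Finset.mul_singleton, Finset.card_smul_finset]
    exact Finset.card_le_card (Finset.filter_subset _ _)
  · intro z hz
    rcases Finset.mem_mul.1 hz with ⟨f, hf, b, hb, rfl⟩
    rw [Finset.mem_singleton] at hb
    subst hb
    have hqf := (Finset.mem_filter.1 hf).2
    have hqh := (Finset.mem_filter.1 hh₀).2
    have : qc h₀ = qc f := by rw [hqf, hqh]
    exact (hqc h₀ f).1 this
  · have e3 : A * (Fc c * {h₀⁻¹}) = (A * Fc c) * {h₀⁻¹} := (mul_assoc _ _ _).symm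
    rw [e3, Finset.mul_singleton, Finset.card_smul_finset, Finset.mul_singleton,
      Finset.card_smul_finset]
    exact hc

end UAQuotAux

open UAQuotAux in
theorem uniformlyAmenable_of_quotients' {G : Type*} [Group G] {ι : Type*} [Nonempty ι]
    (N : ι → Subgroup G) [∀ i, (N i).Normal]
    (hbase : ∀ i j : ι, ∃ k : ι, N k ≤ N i ⊓ N j)
    (htriv : ∀ g : G, (∀ i, g ∈ N i) → g = 1)
    (hquot : ∃ m : ℝ → ℕ → ℕ, ∀ ε : ℝ, 0 < ε → ∀ i : ι, ∀ S : Finset (G ⧸ N i),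
      ∃ F : Finset (G ⧸ N i), F.Nonempty ∧ F.card ≤ m ε S.card ∧
        ((S * F).card : ℝ) ≤ (1 + ε) * F.card) :
    UniformlyAmenableGroup G := by
  classical
  obtain ⟨m, hm⟩ := hquot
  refine ⟨fun ε n => (Finset.range (n + 1)).sup (m ε), ?_⟩
  intro ε hε S
  -- Build an ultrafilter containing the filter base sets.
  have hdir : Directed (· ≥ ·) (fun i => Filter.principal {j | N j ≤ N i}) := by
    intro i j
    obtain ⟨k, hk⟩ := hbase i j
    exact ⟨k, Filter.principal_mono.2 fun l hl => le_trans hl (hk.trans inf_le_left),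
      Filter.principal_mono.2 fun l hl => le_trans hl (hk.trans inf_le_right)⟩
  haveI : Filter.NeBot (⨅ i, Filter.principal {j | N j ≤ N i}) :=
    Filter.iInf_neBot_of_directed hdir (fun i => Filter.principal_neBot_iff.2
      (by obtain ⟨k, hk⟩ := hbase i i; exact ⟨k, hk.trans inf_le_left⟩))
  set U : Ultrafilter ι := Ultrafilter.of (⨅ i, Filter.principal {j | N j ≤ N i}) with hUdef
  have hUB : ∀ i : ι, {j | N j ≤ N i} ∈ U := fun i =>
    Filter.le_principal_iff.1 (le_trans (Ultrafilter.of_le _) (iInf_le _ i))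
  have hφinj : Function.Injective (φ N U) := φ_injective N U htriv hUB
  -- quotient Følner sets
  choose Fb hFbne hFbcard hFbmul using fun i =>
    hm ε hε i (S.image (QuotientGroup.mk : G → G ⧸ N i))
  set M : ℕ := (Finset.range (S.card + 1)).sup (m ε) with hM
  have hcardM : ∀ i, (Fb i).card ≤ M :=
    fun i => le_trans (hFbcard i) (Finset.le_sup (Finset.mem_range.2
      (Nat.lt_succ_of_le Finset.card_image_le)))
  -- extract a constant cardinality k on a U-large set
  have hconst : ∃ k ∈ Finset.range (M + 1), {i | (Fb i).card = k} ∈ U := by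
    by_contra hcon
    push_neg at hcon
    have hmem : ∀ k ∈ Finset.range (M + 1), ∀ᶠ i in (U : Filter ι), (Fb i).card ≠ k := by
      intro k hk
      have : {i | (Fb i).card = k}ᶜ ∈ U := Ultrafilter.compl_mem_iff_notMem.2 (hcon k hk)
      simpa [Filter.eventually_iff, Set.compl_setOf] using this
    have : ∀ᶠ i in (U : Filter ι), ∀ k ∈ Finset.range (M + 1), (Fb i).card ≠ k :=
      (Filter.eventually_all_finset _).2 hmem
    obtain ⟨i, hi⟩ := this.exists
    exact hi ((Fb i).card) (Finset.mem_range.2 (Nat.lt_succ_of_le (hcardM i))) rfl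
  obtain ⟨k, hkM, hA⟩ := hconst
  have hkM' : k ≤ M := Nat.lt_succ_iff.1 (Finset.mem_range.1 hkM)
  have hkpos : 0 < k := by
    obtain ⟨i₀, hi₀⟩ := Filter.nonempty_of_mem hA
    rw [← hi₀]; exact Finset.card_pos.2 (hFbne i₀)
  -- enumerations
  set e : ∀ i, Fin k → G ⧸ N i := fun i a =>
    if h : (a : ℕ) < (Fb i).card then ((Fb i).equivFin.symm ⟨a, h⟩ : G ⧸ N i) else 1 with he
  have he_mem : ∀ i, (Fb i).card = k → ∀ a : Fin k, e i a ∈ Fb i := by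
    intro i hi a
    have h : (a : ℕ) < (Fb i).card := hi ▸ a.isLt
    simp only [he, dif_pos h]
    exact Finset.coe_mem _
  have he_inj : ∀ i, (Fb i).card = k → Function.Injective (e i) := by
    intro i hi a b hab
    have ha : (a : ℕ) < (Fb i).card := hi ▸ a.isLt
    have hb : (b : ℕ) < (Fb i).card := hi ▸ b.isLt
    simp only [he, dif_pos ha, dif_pos hb] at hab
    have := (Fb i).equivFin.symm.injective (Subtype.coe_injective hab)
    exact Fin.ext (by simpa using congrArg Fin.val this)
  have he_surj : ∀ i, (Fb i).card = k → ∀ y ∈ Fb i, ∃ a : Fin k, e i a = y := by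
    intro i hi y hy
    refine ⟨⟨((Fb i).equivFin ⟨y, hy⟩ : Fin (Fb i).card), hi ▸ ((Fb i).equivFin ⟨y, hy⟩).isLt⟩, ?_⟩
    have h : ((((Fb i).equivFin ⟨y, hy⟩ : Fin (Fb i).card)) : ℕ) < (Fb i).card :=
      ((Fb i).equivFin ⟨y, hy⟩).isLt
    simp only [he, dif_pos h]
    have heq : (⟨(((Fb i).equivFin ⟨y, hy⟩ : Fin (Fb i).card) : ℕ), h⟩ : Fin (Fb i).card) =
        (Fb i).equivFin ⟨y, hy⟩ := Fin.ext rfl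
    rw [heq, Equiv.symm_apply_apply]
  -- points of H
  set xq : Fin k → H N U := fun a => QuotientGroup.mk' (K N U) (fun i => e i a) with hxq
  have hxq_inj : Function.Injective xq := by
    intro a b hab
    simp only [hxq, QuotientGroup.mk'_apply] at hab
    have hK : (fun i => e i a)⁻¹ * (fun i => e i b) ∈ K N U := QuotientGroup.eq.1 hab
    rw [mem_K] at hK
    have hmem : ({i | (Fb i).card = k} ∩
        {i | ((fun i => e i a)⁻¹ * fun i => e i b) i = 1} : Set ι) ∈ U :=
      Filter.inter_mem hA hK
    obtain ⟨i, hi1, hi2⟩ := Filter.nonempty_of_mem hmem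
    have heab : e i a = e i b := by
      have h2 := hi2
      simp only [Set.mem_setOf_eq, Pi.mul_apply, Pi.inv_apply, inv_mul_eq_one] at h2
      exact h2
    exact he_inj i hi1 heab
  set F₀ : Finset (H N U) := Finset.univ.image xq with hF₀
  have hF₀card : F₀.card = k := by
    rw [hF₀, Finset.card_image_of_injective _ hxq_inj, Finset.card_univ, Fintype.card_fin]
  have hF₀ne : F₀.Nonempty :=
    ⟨xq ⟨0, hkpos⟩, Finset.mem_image_of_mem _ (Finset.mem_univ _)⟩
  -- the product set in H
  set T : Finset (G × Fin k) := S ×ˢ (Finset.univ : Finset (Fin k)) with hT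
  set u : G × Fin k → H N U := fun p => φ N U p.1 * xq p.2 with hu
  set v : ∀ i, G × Fin k → G ⧸ N i := fun i p => (p.1 : G ⧸ N i) * e i p.2 with hv
  have hΦ : (S.image (φ N U)) * F₀ = T.image u := by
    ext z
    simp only [Finset.mem_mul, Finset.mem_image, hT, Finset.mem_product, Finset.mem_univ,
      and_true, hF₀, hu]
    constructor
    · rintro ⟨y, ⟨s, hs, rfl⟩, f, ⟨a, _, rfl⟩, rfl⟩
      exact ⟨(s, a), hs, rfl⟩
    · rintro ⟨⟨s, a⟩, hs, rfl⟩
      exact ⟨φ N U s, ⟨s, hs, rfl⟩, xq a, ⟨a, trivial, rfl⟩, rfl⟩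
  have hurep : ∀ p : G × Fin k, u p = QuotientGroup.mk' (K N U) (fun i => v i p) := by
    intro p
    show φ N U p.1 * xq p.2 = _
    rw [hxq]
    show QuotientGroup.mk' (K N U) (ψ N p.1) * QuotientGroup.mk' (K N U) (fun i => e i p.2) = _
    rw [← map_mul]
    rfl
  have hsel : ∀ᶠ i in (U : Filter ι), ∀ p ∈ T, ∀ q ∈ T, u p ≠ u q → v i p ≠ v i q := by
    rw [Filter.eventually_all_finset]
    intro p hp
    rw [Filter.eventually_all_finset]
    intro q hq
    by_cases hpq : u p = u q
    · exact Filter.Eventually.of_forall fun i hne => absurd hpq hne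
    · have hK : ¬ ((fun i => v i p)⁻¹ * (fun i => v i q) ∈ K N U) := by
        intro hmemK
        refine hpq ?_
        rw [hurep p, hurep q]
        simp only [QuotientGroup.mk'_apply]
        exact QuotientGroup.eq.2 hmemK
      rw [mem_K] at hK
      have hcompl : ∀ᶠ i in (U : Filter ι),
          ¬ ((fun i => v i p)⁻¹ * (fun i => v i q)) i = 1 :=
        (Ultrafilter.eventually_not (f := U)).2 hK
      refine hcompl.mono fun i h _ => ?_
      simp only [Pi.mul_apply, Pi.inv_apply, inv_mul_eq_one] at h
      exact h
  obtain ⟨i, hik, hiv⟩ := Filter.nonempty_of_mem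
    (Filter.inter_mem hA (Filter.eventually_iff.1 hsel))
  have himg : T.image (v i) = (S.image (QuotientGroup.mk : G → G ⧸ N i)) * Fb i := by
    ext y
    simp only [Finset.mem_image, Finset.mem_mul, hT, Finset.mem_product, Finset.mem_univ,
      and_true]
    constructor
    · rintro ⟨⟨s, a⟩, hs, rfl⟩
      exact ⟨(s : G ⧸ N i), ⟨s, hs, rfl⟩, e i a, he_mem i hik a, rfl⟩
    · rintro ⟨y', ⟨s, hs, rfl⟩, z, hz, rfl⟩
      obtain ⟨a, ha⟩ := he_surj i hik z hz
      exact ⟨(s, a), hs, by rw [hv]; simp only; rw [ha]⟩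
  have hcardΦ : (((S.image (φ N U)) * F₀).card : ℝ) ≤ (1 + ε) * k := by
    have h1 : (T.image u).card ≤ (T.image (v i)).card :=
      card_image_le_image T (v i) u (fun p hp q hq hvq => by
        by_contra hne; exact hiv p hp q hq hne hvq)
    rw [hΦ]
    calc ((T.image u).card : ℝ) ≤ ((T.image (v i)).card : ℝ) := by exact_mod_cast h1
      _ = (((S.image (QuotientGroup.mk : G → G ⧸ N i)) * Fb i).card : ℝ) := by rw [himg]
      _ ≤ (1 + ε) * (Fb i).card := hFbmul i
      _ = (1 + ε) * k := by rw [hik]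
  -- coset trick
  obtain ⟨F', hF'ne, hF'card, hF'mem, hF'fol⟩ :=
    exists_coset_folner (φ N U).range (S.image (φ N U)) F₀
      (fun a ha => by
        rcases Finset.mem_image.1 ha with ⟨s, _, rfl⟩
        exact ⟨s, rfl⟩)
      hF₀ne (by rw [hF₀card]; exact hcardΦ)
  set F : Finset G := F'.preimage (φ N U) (hφinj.injOn) with hF
  have hFimg : F.image (φ N U) = F' := by
    rw [hF, Finset.image_preimage]
    refine Finset.filter_true_of_mem fun x hx => ?_
    obtain ⟨y, hy⟩ := hF'mem x hx
    exact ⟨y, hy⟩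
  have hFcard : F.card = F'.card := by
    rw [← hFimg, Finset.card_image_of_injective _ hφinj]
  refine ⟨F, ?_, ?_, ?_⟩
  · obtain ⟨z, hz⟩ := hF'ne
    obtain ⟨g, hg⟩ := hF'mem z hz
    exact ⟨g, Finset.mem_preimage.2 (by rw [hg]; exact hz)⟩
  · calc F.card = F'.card := hFcard
      _ ≤ F₀.card := hF'card
      _ = k := hF₀card
      _ ≤ M := hkM'
  · have himul : (S * F).image (φ N U) = (S.image (φ N U)) * F' := by
      rw [Finset.image_mul (φ N U), hFimg]
    calc ((S * F).card : ℝ)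
        = (((S * F).image (φ N U)).card : ℝ) := by
          rw [Finset.card_image_of_injective _ hφinj]
      _ = (((S.image (φ N U)) * F').card : ℝ) := by rw [himul]
      _ ≤ (1 + ε) * F'.card := hF'fol
      _ = (1 + ε) * F.card := by rw [hFcard]


set_option maxHeartbeats 2000000 in
/-- Let `G` be a group and let `ℱ = (N i)_{i : ι}` be a filter base of normal subgroups with
trivial intersection.  If the class `{G/N : N ∈ ℱ}` is uniformly amenable, then `G` is
uniformly amenable. -/
theorem uniformlyAmenable_of_quotients {G : Type*} [Group G] {ι : Type*} [Nonempty ι]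
    (N : ι → Subgroup G) [∀ i, (N i).Normal]
    (hbase : ∀ i j : ι, ∃ k : ι, N k ≤ N i ⊓ N j)
    (htriv : ∀ g : G, (∀ i, g ∈ N i) → g = 1)
    (hquot : UniformlyAmenableFamily fun i => G ⧸ N i) :
    UniformlyAmenableGroup G := by
  obtain ⟨m, hm⟩ := hquot
  refine uniformlyAmenable_of_quotients' N hbase htriv ⟨m, ?_⟩
  intro ε hε i S
  obtain ⟨F, h1, h2, h3⟩ := hm ε hε i S
  exact ⟨F, h1, h2, by
    convert h3 using 4
    exact congrArg (fun d => @instHMul _ (@Finset.mul _ d _)) (Subsingleton.elim _ _)⟩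
end

section
/- Extensions of uniformly amenable groups are uniformly amenable: if 1 → N → G → Q → 1 is a short exact sequence of groups with N and Q uniformly amenable, then G is uniformly amenable. -/
open Pointwise

attribute [local instance] Classical.propDecidable

/-- Extensions of uniformly amenable groups are uniformly amenable: if
`1 → N → G → Q → 1` is a short exact sequence of groups with `N` and `Q` uniformly
amenable, then `G` is uniformly amenable. -/
theorem uniformlyAmenable_extension {N G Q : Type*} [Group N] [Group G] [Group Q]
    (f : N →* G) (g : G →* Q) (hf : Function.Injective f) (hg : Function.Surjective g)
    (hexact : ∀ x : G, g x = 1 ↔ x ∈ f.range)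
    (hN : UniformlyAmenableGroup N) (hQ : UniformlyAmenableGroup Q) :
    UniformlyAmenableGroup G := by
  classical
  obtain ⟨mN, hmN⟩ := hN
  obtain ⟨mQ, hmQ⟩ := hQ
  have hgf : ∀ n : N, g (f n) = 1 := fun n => (hexact (f n)).mpr ⟨n, rfl⟩
  set σ : Q → G := Function.surjInv hg with hσdef
  have hσ : ∀ q, g (σ q) = q := Function.surjInv_eq hg
  have hker : ∀ (s : G) (b : Q), ∃ n : N, f n = (σ (g s * b))⁻¹ * s * σ b := by
    intro s b
    have h1 : g ((σ (g s * b))⁻¹ * s * σ b) = 1 := by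
      simp [map_mul, map_inv, hσ]
    exact (hexact _).mp h1
  choose ν hν using hker
  set MQ : ℝ → ℕ → ℕ := fun ε k => (Finset.range (k + 1)).sup (fun j => mQ (min ε 1 / 3) j)
    with hMQdef
  refine ⟨fun ε k => ((Finset.range (k * MQ ε k + 1)).sup
      (fun j => mN (min ε 1 / 3) j)) * MQ ε k, ?_⟩
  intro ε hε S
  set ε' : ℝ := min ε 1 / 3 with hε'def
  have hε'pos : 0 < ε' := by
    have : 0 < min ε 1 := lt_min hε one_pos
    positivity
  have hε'le : ε' ≤ 1 / 3 := by
    have : min ε 1 ≤ 1 := min_le_right _ _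
    rw [hε'def]; linarith
  have h3ε' : 3 * ε' ≤ ε := by
    have : min ε 1 ≤ ε := min_le_left _ _
    rw [hε'def]; linarith
  obtain ⟨B, hBne, hBcard, hBfoln⟩ := hmQ ε' hε'pos (S.image g)
  set T : Finset N := (S ×ˢ B).image (fun p => ν p.1 p.2) with hTdef
  obtain ⟨A, hAne, hAcard, hAfoln⟩ := hmN ε' hε'pos T
  set φ : Q × N → G := fun p => σ p.1 * f p.2 with hφdef
  have hφinj : Function.Injective φ := by
    rintro ⟨q1, n1⟩ ⟨q2, n2⟩ h
    simp only [hφdef] at h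
    have hq : q1 = q2 := by
      have := congrArg g h
      simpa [map_mul, hσ, hgf] using this
    subst hq
    have : f n1 = f n2 := by
      exact mul_left_cancel h
    exact Prod.ext rfl (hf this)
  set F : Finset G := (B ×ˢ A).image φ with hFdef
  have hFcard : F.card = B.card * A.card := by
    rw [hFdef, Finset.card_image_of_injective _ hφinj, Finset.card_product]
  have hBcard' : B.card ≤ MQ ε S.card := by
    refine le_trans hBcard ?_
    refine Finset.le_sup (f := fun j => mQ ε' j) ?_
    exact Finset.mem_range.mpr (Nat.lt_succ_of_le (Finset.card_image_le))
  have hTcard : T.card ≤ S.card * MQ ε S.card := by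
    calc T.card ≤ (S ×ˢ B).card := Finset.card_image_le
      _ = S.card * B.card := Finset.card_product _ _
      _ ≤ S.card * MQ ε S.card := Nat.mul_le_mul_left _ hBcard'
  have hAcard' : A.card ≤ (Finset.range (S.card * MQ ε S.card + 1)).sup
      (fun j => mN ε' j) := by
    refine le_trans hAcard ?_
    exact Finset.le_sup (Finset.mem_range.mpr (Nat.lt_succ_of_le hTcard))
  refine ⟨F, ?_, ?_, ?_⟩
  · obtain ⟨b, hb⟩ := hBne
    obtain ⟨a, ha⟩ := hAne
    exact ⟨φ (b, a), Finset.mem_image_of_mem _ (Finset.mem_product.mpr ⟨hb, ha⟩)⟩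
  · rw [hFcard]
    exact Nat.mul_le_mul hAcard' hBcard' |>.trans_eq' (Nat.mul_comm _ _)
  · -- key inclusion
    have hsub : S * F ⊆ ((S.image g * B) ×ˢ (T * A)).image φ := by
      intro x hx
      obtain ⟨s, hs, y, hy, rfl⟩ := Finset.mem_mul.mp hx
      obtain ⟨⟨b, a⟩, hba, rfl⟩ := Finset.mem_image.mp hy
      obtain ⟨hb, ha⟩ := Finset.mem_product.mp hba
      refine Finset.mem_image.mpr ⟨(g s * b, ν s b * a), ?_, ?_⟩
      · refine Finset.mem_product.mpr ⟨?_, ?_⟩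
        · exact Finset.mul_mem_mul (Finset.mem_image_of_mem g hs) hb
        · refine Finset.mul_mem_mul ?_ ha
          exact Finset.mem_image.mpr ⟨(s, b), Finset.mem_product.mpr ⟨hs, hb⟩, rfl⟩
      · simp only [hφdef, map_mul, hν s b]
        group
    have hcard1 : (S * F).card ≤ (S.image g * B).card * (T * A).card := by
      calc (S * F).card ≤ (((S.image g * B) ×ˢ (T * A)).image φ).card :=
            Finset.card_le_card hsub
        _ ≤ ((S.image g * B) ×ˢ (T * A)).card := Finset.card_image_le
        _ = (S.image g * B).card * (T * A).card := Finset.card_product _ _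
    have hB0 : (0:ℝ) ≤ B.card := Nat.cast_nonneg _
    have hA0 : (0:ℝ) ≤ A.card := Nat.cast_nonneg _
    have hQB : ((T * A).card : ℝ) ≥ 0 := Nat.cast_nonneg _
    have h1 : ((S * F).card : ℝ) ≤ ((S.image g * B).card : ℝ) * ((T * A).card : ℝ) := by
      exact_mod_cast hcard1
    have h2 : ((S * F).card : ℝ) ≤ (1 + ε') * B.card * ((1 + ε') * A.card) := by
      refine h1.trans ?_
      have := mul_le_mul hBfoln hAfoln hQB (by positivity)
      linarith
    rw [hFcard]
    push_cast
    have hε'1 : (1 + ε') * (1 + ε') ≤ 1 + ε := by nlinarith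
    nlinarith [mul_nonneg hB0 hA0, mul_le_mul_of_nonneg_right hε'1 (mul_nonneg hB0 hA0)]
end

section
/- Every direct union (directed colimit with injective maps) of m-uniformly amenable groups is m-uniformly amenable. In particular, a group that is the union of a directed family of m-uniformly amenable subgroups is m-uniformly amenable. -/
open Pointwise

attribute [local instance] Classical.propDecidable

/-- A group is `m`-uniformly amenable for `m : ℝ_{>0} × ℕ → ℕ`. -/
def MUniformlyAmenable (m : ℝ → ℕ → ℕ) (G : Type*) [Group G] : Prop :=
  ∀ ε : ℝ, 0 < ε → ∀ S : Finset G,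
    ∃ F : Finset G, F.Nonempty ∧ F.card ≤ m ε S.card ∧
      ((S * F).card : ℝ) ≤ (1 + ε) * F.card

/-! An injective homomorphism preserves the cardinalities of `S`, `F` and `S * F`, so a Følner
set for `S` in a subgroup containing `S` is one in `G`; and every finite subset of a directed
union of subgroups lies in one of them. -/

namespace MUniformlyAmenable

variable {m : ℝ → ℕ → ℕ} {G K : Type*} [Group G] [Group K]

theorem exists_of_subset_range (hK : MUniformlyAmenable m K) {f : K →* G}
    (hf : Function.Injective f) {ε : ℝ} (hε : 0 < ε) {S : Finset G}
    (hS : (S : Set G) ⊆ Set.range f) :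
    ∃ F : Finset G, F.Nonempty ∧ F.card ≤ m ε S.card ∧
      ((S * F).card : ℝ) ≤ (1 + ε) * F.card := by
  rw [← Set.image_univ] at hS
  obtain ⟨S', -, rfl⟩ := Finset.subset_set_image_iff.mp hS
  obtain ⟨F', hF'ne, hF'card, hF'mul⟩ := hK ε hε S'
  refine ⟨F'.image f, hF'ne.image f, ?_, ?_⟩
  · rwa [Finset.card_image_of_injective _ hf, Finset.card_image_of_injective _ hf]
  · rwa [← Finset.image_mul, Finset.card_image_of_injective _ hf,
      Finset.card_image_of_injective _ hf]

theorem of_forall_finset_subset_subgroup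
    (h : ∀ S : Finset G, ∃ K : Subgroup G, MUniformlyAmenable m K ∧ (S : Set G) ⊆ K) :
    MUniformlyAmenable m G := by
  intro ε hε S
  obtain ⟨K, hK, hSK⟩ := h S
  exact hK.exists_of_subset_range K.subtype_injective hε (by simpa using hSK)

end MUniformlyAmenable

/-- A direct union of `m`-uniformly amenable groups is `m`-uniformly amenable: if a group
`G` is the union of a directed family of `m`-uniformly amenable subgroups, then `G` is
`m`-uniformly amenable. -/
theorem mUniformlyAmenable_directed_union {G : Type*} [Group G] (m : ℝ → ℕ → ℕ)
    {ι : Type*} [Nonempty ι] (H : ι → Subgroup G)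
    (hdir : ∀ i j : ι, ∃ k : ι, H i ≤ H k ∧ H j ≤ H k)
    (hunion : ∀ g : G, ∃ i, g ∈ H i)
    (hH : ∀ i, MUniformlyAmenable m (H i)) :
    MUniformlyAmenable m G := by
  have hdirected : Directed (· ⊆ ·) fun i ↦ (H i : Set G) := fun i j ↦ hdir i j
  refine MUniformlyAmenable.of_forall_finset_subset_subgroup fun S ↦ ?_
  obtain ⟨i, hi⟩ := hdirected.exists_mem_subset_of_finset_subset_biUnion
    (s := S) fun g _ ↦ Set.mem_iUnion.mpr (hunion g)
  exact ⟨H i, hH i, hi⟩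
end
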